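/- (Gentle measurement) Let ρ be a density matrix and E an operator with 0 ≤ E ≤ I such that Tr(Eρ) ≥ 1 − ε. Then the post-measurement state ρ' = (√E ρ √E)/Tr(Eρ) satisfies ‖ρ − ρ'‖₁ ≤ 2√ε, where ‖·‖₁ denotes the trace norm. -/

import Mathlib

open Matrix
open scoped ComplexOrder

/-- The trace norm `‖M‖₁ = Tr √(M†M)` (the sum of the singular values of `M`). -/
noncomputable def traceNorm {d : ℕ} (M : Matrix (Fin d) (Fin d) ℂ) : ℝ :=
  (((Matrix.posSemidef_conjTranspose_mul_self M).1.eigenvectorUnitary : Matrix (Fin d) (Fin d) ℂ) *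
    diagonal ((fun x : ℝ => (x : ℂ)) ∘ (Real.sqrt ∘ (Matrix.posSemidef_conjTranspose_mul_self M).1.eigenvalues)) *
    (star (Matrix.posSemidef_conjTranspose_mul_self M).1.eigenvectorUnitary :
      Matrix (Fin d) (Fin d) ℂ)).trace.re

/-!
Put `t = Tr(SρS)` and `σ = SρS / t`, and let `P` project onto the positive part of `ρ - σ`, so that
`‖ρ - σ‖₁ = 2 (a - b)` with `a = Tr(Pρ)`, `b = Tr(Pσ)`. Cauchy–Schwarz for `⟪X, Y⟫ = Tr(Y ρ Xᴴ)`,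
applied on the ranges of `P` and `1 - P`, bounds `Tr(Sρ)` by `√t` times the classical fidelity
`F = √(ab) + √((1 - a)(1 - b))`, while `S ≥ S² = E` gives `Tr(Sρ) ≥ t`. Hence `t ≤ F²`, and the
two-point Fuchs–van de Graaf inequality `(a - b)² + F² ≤ 1` yields `a - b ≤ √(1 - t) ≤ √ε`.
-/

open scoped MatrixOrder

section CFC

variable {A : Type*} [Ring A] [StarRing A] [TopologicalSpace A] [Algebra ℝ A]
  [ContinuousFunctionalCalculus ℝ A IsSelfAdjoint] [PartialOrder A] [StarOrderedRing A]
  [NonnegSpectrumClass ℝ A]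

lemma mul_self_le_self_of_mul_self_le_one {a : A} (ha : 0 ≤ a) (h : a * a ≤ 1) : a * a ≤ a := by
  rw [← cfc_id' ℝ a, ← cfc_mul ..] at h ⊢
  rw [← cfc_one ℝ a, cfc_le_iff ..] at h
  rw [cfc_le_iff ..]
  intro x hx
  have hx1 : x * x ≤ 1 := h x hx
  nlinarith [spectrum_nonneg_of_nonneg ha hx]

end CFC

section Matrix

variable {n 𝕜 : Type*} [Fintype n] [RCLike 𝕜]

lemma Matrix.PosSemidef.trace_mul_nonneg [DecidableEq n] {A B : Matrix n n 𝕜} (hA : A.PosSemidef)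
    (hB : B.PosSemidef) : 0 ≤ (A * B).trace := by
  obtain ⟨C, rfl⟩ := CStarAlgebra.nonneg_iff_eq_star_mul_self.mp hA.nonneg
  rw [mul_assoc, trace_mul_comm, mul_assoc, star_eq_conjTranspose, ← mul_assoc]
  exact (hB.mul_mul_conjTranspose_same C).trace_nonneg

lemma Matrix.PosSemidef.re_trace_mul_le_sqrt_mul_sqrt {ρ : Matrix n n 𝕜} (hρ : ρ.PosSemidef)
    (X Y : Matrix n n 𝕜) :
    RCLike.re (Y * ρ * Xᴴ).trace ≤
      √(RCLike.re (X * ρ * Xᴴ).trace) * √(RCLike.re (Y * ρ * Yᴴ).trace) := by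
  let _ := ρ.toMatrixSeminormedAddCommGroup hρ
  let _ := ρ.toMatrixInnerProductSpace hρ
  exact re_inner_le_norm X Y

lemma Matrix.IsHermitian.exists_isStarProjection_abs_eq [DecidableEq n] {Δ : Matrix n n 𝕜}
    (hΔ : Δ.IsHermitian) : ∃ P, IsStarProjection P ∧ CFC.abs Δ = 2 • (P * Δ) - Δ := by
  have hcont (g : ℝ → ℝ) : ContinuousOn g (spectrum ℝ Δ) := Δ.finite_real_spectrum.continuousOn g
  let f : ℝ → ℝ := fun x => if 0 < x then 1 else 0
  refine ⟨cfc f Δ, ⟨?_, cfc_predicate f Δ⟩, ?_⟩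
  · rw [IsIdempotentElem, ← cfc_mul f f Δ (hcont f) (hcont f)]
    exact cfc_congr fun x _ => by by_cases hx : 0 < x <;> simp [f, hx]
  · rw [CFC.abs_eq_cfc_norm Δ hΔ.isSelfAdjoint]
    calc cfc (‖·‖) Δ = cfc (fun x => 2 • (f x * x) - x) Δ := cfc_congr fun x _ => by
          by_cases hx : 0 < x
          · simp [f, hx, abs_of_pos hx]; ring
          · simp [f, hx, abs_of_nonpos (not_lt.mp hx)]
      _ = 2 • (cfc f Δ * Δ) - Δ := by
          rw [cfc_sub (hf := hcont _) (hg := hcont _), cfc_smul (2 : ℕ) _ Δ (hcont _),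
            cfc_mul f _ Δ (hcont f) (hcont _), cfc_id' ℝ Δ]

lemma Matrix.PosSemidef.re_trace_mul_le_of_le [DecidableEq n] {ρ A B : Matrix n n 𝕜}
    (hρ : ρ.PosSemidef) (hAB : A ≤ B) : RCLike.re (A * ρ).trace ≤ RCLike.re (B * ρ).trace := by
  have := (RCLike.nonneg_iff.mp ((le_iff.mp hAB).trace_mul_nonneg hρ)).1
  rwa [sub_mul, trace_sub, map_sub, sub_nonneg] at this

lemma Matrix.PosSemidef.re_trace_projection_mul_mem_Icc [DecidableEq n] {ρ P : Matrix n n 𝕜}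
    (hρ : ρ.PosSemidef) (hρtr : ρ.trace = 1) (hP : IsStarProjection P) :
    RCLike.re (P * ρ).trace ∈ Set.Icc 0 1 := by
  have h0 := hρ.re_trace_mul_le_of_le hP.nonneg
  have h1 := hρ.re_trace_mul_le_of_le hP.le_one
  rw [zero_mul, trace_zero, map_zero] at h0
  rw [one_mul, hρtr, RCLike.one_re] at h1
  exact ⟨h0, h1⟩

lemma Matrix.PosSemidef.re_trace_projection_mul_le [DecidableEq n] {ρ S P : Matrix n n 𝕜}
    (hρ : ρ.PosSemidef) (hS : S.IsHermitian) (hP : IsStarProjection P) :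
    RCLike.re (P * (S * ρ)).trace ≤
      √(RCLike.re (P * ρ).trace) * √(RCLike.re (P * (S * ρ * S)).trace) := by
  have hPh : Pᴴ = P := hP.isSelfAdjoint
  have hcyc (X : Matrix n n 𝕜) : (P * X * P).trace = (P * X).trace := by
    rw [trace_mul_comm, ← mul_assoc, hP.isIdempotentElem.eq]
  have key := hρ.re_trace_mul_le_sqrt_mul_sqrt P (P * S)
  rwa [conjTranspose_mul, hPh, hS.eq,
    show P * S * ρ * P = P * (S * ρ) * P by simp only [mul_assoc],
    show P * S * ρ * (S * P) = P * (S * ρ * S) * P by simp only [mul_assoc],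
    hcyc, hcyc, hcyc] at key

lemma Matrix.PosSemidef.re_trace_mul_le_fidelity [DecidableEq n] {ρ S P : Matrix n n 𝕜}
    (hρ : ρ.PosSemidef) (hS : S.IsHermitian) (hP : IsStarProjection P) :
    RCLike.re (S * ρ).trace ≤
      √(RCLike.re (P * ρ).trace) * √(RCLike.re (P * (S * ρ * S)).trace) +
      √(RCLike.re ((1 - P) * ρ).trace) * √(RCLike.re ((1 - P) * (S * ρ * S)).trace) := by
  have hsplit : (S * ρ).trace = (P * (S * ρ)).trace + ((1 - P) * (S * ρ)).trace := by
    rw [← trace_add, ← add_mul, add_sub_cancel, one_mul]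
  rw [hsplit, map_add]
  exact add_le_add (hρ.re_trace_projection_mul_le hS hP)
    (hρ.re_trace_projection_mul_le hS hP.one_sub)

end Matrix

lemma sq_sub_add_sq_fidelity_le_one {a b : ℝ} (ha : a ∈ Set.Icc 0 1) (hb : b ∈ Set.Icc 0 1) :
    (a - b) ^ 2 + (√a * √b + √(1 - a) * √(1 - b)) ^ 2 ≤ 1 := by
  obtain ⟨ha0, ha1⟩ := ha
  obtain ⟨hb0, hb1⟩ := hb
  have e1 : √a ^ 2 = a := Real.sq_sqrt ha0
  have e2 : √b ^ 2 = b := Real.sq_sqrt hb0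
  have e3 : √(1 - a) ^ 2 = 1 - a := Real.sq_sqrt (by linarith)
  have e4 : √(1 - b) ^ 2 = 1 - b := Real.sq_sqrt (by linarith)
  nlinarith [sq_nonneg (√a * √(1 - a) - √b * √(1 - b)), Real.sqrt_nonneg a, Real.sqrt_nonneg b,
    Real.sqrt_nonneg (1 - a), Real.sqrt_nonneg (1 - b)]

lemma sub_le_sqrt_one_sub_of_le_fidelity {a b t : ℝ} (ha : a ∈ Set.Icc 0 1) (hb : b ∈ Set.Icc 0 1)
    (ht : 0 < t) (h : t ≤ √a * √(t * b) + √(1 - a) * √(t * (1 - b))) : a - b ≤ √(1 - t) := by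
  set F := √a * √b + √(1 - a) * √(1 - b)
  have hst : 0 < √t := Real.sqrt_pos.mpr ht
  have htF : √t * √t ≤ √t * F := by
    rw [Real.mul_self_sqrt ht.le]
    convert h using 1
    rw [Real.sqrt_mul ht.le, Real.sqrt_mul ht.le]
    ring
  have hF : √t ≤ F := le_of_mul_le_mul_left htF hst
  have htF2 : t ≤ F ^ 2 := by
    rw [← Real.sq_sqrt ht.le]
    exact pow_le_pow_left₀ hst.le hF 2
  have := sq_sub_add_sq_fidelity_le_one ha hb
  exact (le_abs_self _).trans (Real.abs_le_sqrt (by linarith))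

section TraceNorm

variable {d : ℕ}

lemma traceNorm_eq_re_trace_abs (M : Matrix (Fin d) (Fin d) ℂ) :
    traceNorm M = (CFC.abs M).trace.re := by
  have hP := Matrix.posSemidef_conjTranspose_mul_self M
  rw [CFC.abs, CFC.sqrt_eq_cfc, cfc_nnreal_eq_real _ (star M * M), star_eq_conjTranspose,
    hP.1.cfc_eq, traceNorm, IsHermitian.cfc, Unitary.conjStarAlgAut_apply]
  congr 4
  refine congrArg diagonal (funext fun i => ?_)
  simp [max_eq_left (hP.eigenvalues_nonneg i)]

lemma Matrix.PosSemidef.traceNorm_eq {M : Matrix (Fin d) (Fin d) ℂ} (hM : M.PosSemidef) :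
    traceNorm M = M.trace.re := by
  rw [traceNorm_eq_re_trace_abs, CFC.abs_of_nonneg M hM.nonneg]

lemma exists_isStarProjection_traceNorm_sub_eq {ρ σ : Matrix (Fin d) (Fin d) ℂ}
    (hρ : ρ.IsHermitian) (hσ : σ.IsHermitian) (htr : ρ.trace = σ.trace) :
    ∃ P, IsStarProjection P ∧ traceNorm (ρ - σ) = 2 * ((P * ρ).trace.re - (P * σ).trace.re) := by
  obtain ⟨P, hP, habs⟩ := (hρ.sub hσ).exists_isStarProjection_abs_eq
  refine ⟨P, hP, ?_⟩
  rw [traceNorm_eq_re_trace_abs, habs, trace_sub, trace_smul, trace_sub, htr, sub_self, sub_zero,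
    mul_sub, trace_sub]
  simp

lemma traceNorm_sub_normalized_conj_le {ρ S : Matrix (Fin d) (Fin d) ℂ} (hρ : ρ.PosSemidef)
    (hρtr : ρ.trace = 1) (hS : S.PosSemidef) (hS1 : S * S ≤ 1)
    (ht : 0 < (S * ρ * S).trace.re) :
    traceNorm (ρ - ((S * ρ * S).trace)⁻¹ • (S * ρ * S)) ≤ 2 * √(1 - (S * ρ * S).trace.re) := by
  set t := (S * ρ * S).trace.re
  have hSρS := nonneg_iff_posSemidef.mp (hS.1.isSelfAdjoint.conjugate_nonneg hρ.nonneg)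
  have htC : (S * ρ * S).trace = t :=
    Complex.eq_re_of_ofReal_le (r := 0) (by rw [Complex.ofReal_zero]; exact hSρS.trace_nonneg)
  set σ := (t : ℂ)⁻¹ • (S * ρ * S)
  have hSρS_eq : S * ρ * S = (t : ℂ) • σ := by
    rw [smul_smul, mul_inv_cancel₀ (Complex.ofReal_ne_zero.mpr ht.ne'), one_smul]
  have hσ : σ.PosSemidef := hSρS.smul (by simpa using ht.le)
  have hσtr : σ.trace = 1 := by
    rw [trace_smul, htC, smul_eq_mul, inv_mul_cancel₀ (Complex.ofReal_ne_zero.mpr ht.ne')]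
  obtain ⟨P, hP, hnorm⟩ :=
    exists_isStarProjection_traceNorm_sub_eq hρ.1 hσ.1 (hρtr.trans hσtr.symm)
  rw [htC, hnorm]
  have hfid := hρ.re_trace_mul_le_fidelity hS.1 hP
  have hlow : t ≤ (S * ρ).trace.re := by
    have := hρ.re_trace_mul_le_of_le (mul_self_le_self_of_mul_self_le_one hS.nonneg hS1)
    rwa [← trace_mul_cycle] at this
  have ha := hρ.re_trace_projection_mul_mem_Icc hρtr hP
  have hb := hσ.re_trace_projection_mul_mem_Icc hσtr hP
  have hcompl {X : Matrix (Fin d) (Fin d) ℂ} (hX : X.trace = 1) :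
      ((1 - P) * X).trace.re = 1 - (P * X).trace.re := by
    rw [sub_mul, one_mul, trace_sub, hX, Complex.sub_re, Complex.one_re]
  have hscale (Q : Matrix (Fin d) (Fin d) ℂ) :
      (Q * ((t : ℂ) • σ)).trace.re = t * (Q * σ).trace.re := by
    rw [mul_smul_comm, trace_smul, smul_eq_mul, Complex.re_ofReal_mul]
  simp only [RCLike.re_to_complex] at hfid ha hb
  rw [hSρS_eq, hscale, hscale, hcompl hρtr, hcompl hσtr] at hfid
  linarith [sub_le_sqrt_one_sub_of_le_fidelity ha hb ht (hlow.trans hfid)]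

end TraceNorm

theorem gentle_measurement_general {d : ℕ} (ρ E : Matrix (Fin d) (Fin d) ℂ)
    (hρ : ρ.PosSemidef) (hρtr : ρ.trace = 1)
    (hEI : ((1 : Matrix (Fin d) (Fin d) ℂ) - E).PosSemidef)
    (ε : ℝ) (hacc : 1 - ε ≤ (E * ρ).trace.re) :
    ∀ S : Matrix (Fin d) (Fin d) ℂ, S.PosSemidef → S * S = E →
      traceNorm (ρ - ((E * ρ).trace)⁻¹ • (S * ρ * S)) ≤ 2 * Real.sqrt ε := by
  intro S hS hSE
  rw [← hSE, ← trace_mul_cycle] at hacc ⊢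
  have hSρS := nonneg_iff_posSemidef.mp (hS.1.isSelfAdjoint.conjugate_nonneg hρ.nonneg)
  obtain ⟨hre, him⟩ := Complex.nonneg_iff.mp hSρS.trace_nonneg
  rcases hre.eq_or_lt with ht | ht
  · -- with `0⁻¹ = 0` the post-measurement term vanishes, and `ε ≥ 1` here
    have hzero : (S * ρ * S).trace = 0 := Complex.ext ht.symm him.symm
    have hε : 1 ≤ √ε := Real.one_le_sqrt.mpr (by linarith)
    rw [hzero, _root_.inv_zero, zero_smul, sub_zero, hρ.traceNorm_eq, hρtr, Complex.one_re]
    linarith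
  · refine (traceNorm_sub_normalized_conj_le hρ hρtr hS (hSE ▸ le_iff.mpr hEI) ht).trans ?_
    gcongr
    linarith

/-- Gentle measurement lemma: if `0 ≤ E ≤ I` and `Tr(Eρ) ≥ 1 − ε`, then the
post-measurement state `ρ' = √E ρ √E / Tr(Eρ)` satisfies `‖ρ − ρ'‖₁ ≤ 2√ε`. -/
theorem gentle_measurement {d : ℕ} (ρ E : Matrix (Fin d) (Fin d) ℂ)
    (hρ : ρ.PosSemidef) (hρtr : ρ.trace = 1)
    (hE : E.PosSemidef) (hEI : ((1 : Matrix (Fin d) (Fin d) ℂ) - E).PosSemidef)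
    (ε : ℝ) (hε : 0 ≤ ε) (hacc : 1 - ε ≤ (E * ρ).trace.re) :
    ∀ S : Matrix (Fin d) (Fin d) ℂ, S.PosSemidef → S * S = E →
      traceNorm (ρ - ((E * ρ).trace)⁻¹ • (S * ρ * S)) ≤ 2 * Real.sqrt ε :=
  gentle_measurement_general ρ E hρ hρtr hEI ε hacc
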